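/- arXiv:1207.0463 — 4 statements merged into one kernel-verified Lean document; each statement's English description precedes it below -/
import Mathlib

section
/- For 0 < c < 1 and real x with x > (1+√c)/(1-√c), both roots of the quadratic E^2 + [(1/x)(1/c - 1) - (1/c + 1)]E + 1/c = 0 are real and positive. -/
/-!
Since `0 < c < 1`, the condition on `x` amounts to the linear coefficient `b` satisfying
`-b > 2 / √c = 2 √(1/c)`; hence `b < 0` and the discriminant `b² - 4/c` is nonnegative.
A monic real quadratic with nonnegative discriminant has only real roots, and with `b ≤ 0` and a
positive constant term it has no root `r ≤ 0`, since then every term of `r² + b r + k` is `≥ 0`.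
-/

lemma pos_of_sq_add_mul_add_eq_zero {b k r : ℝ} (hb : b ≤ 0) (hk : 0 < k)
    (h : r ^ 2 + b * r + k = 0) : 0 < r := by
  nlinarith

namespace Complex

lemma exists_ofReal_eq_of_quadratic_eq_zero {b k : ℝ} (hdisc : 4 * k ≤ b ^ 2) {z : ℂ}
    (hz : z ^ 2 + b * z + k = 0) : ∃ r : ℝ, z = r := by
  set s := √(b ^ 2 - 4 * k)
  have hs : discrim (1 : ℂ) b k = s * s := by
    rw [← ofReal_mul, Real.mul_self_sqrt (by linarith), discrim]
    push_cast
    ring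
  rcases (quadratic_eq_zero_iff one_ne_zero hs z).1 (by linear_combination hz) with h | h
  · exact ⟨(-b + s) / 2, by rw [h]; push_cast; ring⟩
  · exact ⟨(-b - s) / 2, by rw [h]; push_cast; ring⟩

lemma exists_pos_ofReal_eq_of_quadratic_eq_zero {b k : ℝ} (hb : b ≤ 0) (hk : 0 < k)
    (hdisc : 4 * k ≤ b ^ 2) {z : ℂ} (hz : z ^ 2 + b * z + k = 0) : ∃ r : ℝ, 0 < r ∧ z = r := by
  obtain ⟨r, rfl⟩ := exists_ofReal_eq_of_quadratic_eq_zero hdisc hz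
  have hr : r ^ 2 + b * r + k = 0 := by exact_mod_cast hz
  exact ⟨r, pos_of_sq_add_mul_add_eq_zero hb hk hr, rfl⟩

end Complex

lemma two_div_sqrt_le_of_lt {c x : ℝ} (hc0 : 0 < c) (hc1 : c < 1)
    (hx : (1 + √c) / (1 - √c) < x) : 2 / √c ≤ -((1 / x) * (1 / c - 1) - (1 / c + 1)) := by
  obtain ⟨s, hs0, rfl⟩ : ∃ s, 0 < s ∧ c = s ^ 2 :=
    ⟨√c, Real.sqrt_pos.2 hc0, (Real.sq_sqrt hc0.le).symm⟩
  rw [Real.sqrt_sq hs0.le] at hx ⊢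
  have hs1 : s < 1 := by nlinarith
  have hx' : 1 + s < x * (1 - s) := (div_lt_iff₀ (by linarith)).1 hx
  have hx0 : 0 < x := by nlinarith
  have key : (1 / s ^ 2 + 1) - (1 / x) * (1 / s ^ 2 - 1) - 2 / s
      = (1 - s) * (x * (1 - s) - (1 + s)) / (x * s ^ 2) := by
    field_simp
    ring
  have : 0 ≤ (1 - s) * (x * (1 - s) - (1 + s)) / (x * s ^ 2) :=
    div_nonneg (mul_nonneg (by linarith) (by linarith)) (by positivity)
  linarith

/-- For `0 < c < 1` and `x > (1+√c)/(1-√c)`, both roots of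
`E^2 + ((1/x)(1/c-1) - (1/c+1))E + 1/c = 0` are real and positive. -/
theorem stmt3 (c x : ℝ) (hc0 : 0 < c) (hc1 : c < 1)
    (hx : (1 + Real.sqrt c)/(1 - Real.sqrt c) < x) :
    ∀ E : ℂ, E^2 + (((1/x) * (1/c - 1) - (1/c + 1) : ℝ) : ℂ) * E + ((1/c : ℝ) : ℂ) = 0 →
      ∃ r : ℝ, 0 < r ∧ E = (r : ℂ) := by
  intro E hE
  have hb := two_div_sqrt_le_of_lt hc0 hc1 hx
  have h2s : 0 < 2 / √c := by positivity
  have hsq : (2 / √c) ^ 2 = 4 * (1 / c) := by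
    rw [div_pow, Real.sq_sqrt hc0.le]
    ring
  have hdisc := pow_le_pow_left₀ h2s.le hb 2
  rw [hsq, neg_sq] at hdisc
  exact Complex.exists_pos_ofReal_eq_of_quadratic_eq_zero (by linarith) (by positivity)
    hdisc hE
end

section
/- Suppose a two-valued algebraic function E on the Riemann sphere has a simple zero at z=0 on one sheet, a simple pole at z=0 on the other sheet, and behaves as E = 1 + 1/z + o(1/z) on sheet 0 and E = (1/c)(1 - 1/z) + o(1/z) on sheet 1 as z → ∞. Then the product of the two branches equals 1/c and their sum equals (1/c + 1) - (1/z)(1/c - 1); consequently E satisfies E^2 + [(1/z)(1/c - 1) - (1/c + 1)]E + 1/c = 0. -/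
/-!
Both `z (E0 E1 - 1/c)` and `z (E0 + E1 - (1/c + 1) + (1/c - 1)/z)` are Laurent polynomials with
poles only at `0`. The simple zero of `E0` and the simple pole of `E1` at `0` keep them bounded
there, so they are polynomials; the expansions at infinity make them tend to `0` at infinity, so
they vanish. The quadratic equation is then Vieta's relation.
-/

open Asymptotics Bornology Filter Polynomial Topology

section Laurent

variable {𝕜 : Type*} [NontriviallyNormedField 𝕜]

theorem Polynomial.X_pow_dvd_of_tendsto_eval_div_pow {R : 𝕜[X]} {k : ℕ} {L : 𝕜}
    (h : Tendsto (fun z => R.eval z / z ^ k) (𝓝[≠] 0) (𝓝 L)) : X ^ k ∣ R := by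
  induction k generalizing R with
  | zero => simp
  | succ k ih =>
    have hR0 : R.eval 0 = 0 := by
      have hpow : Tendsto (fun z : 𝕜 => z ^ (k + 1)) (𝓝[≠] 0) (𝓝 0) :=
        tendsto_nhdsWithin_of_tendsto_nhds ((continuous_pow (k + 1)).tendsto' 0 0 (by simp))
      have hlim := h.mul hpow
      rw [mul_zero] at hlim
      refine tendsto_nhds_unique (tendsto_nhdsWithin_of_tendsto_nhds R.continuous.continuousAt)
        (hlim.congr' ?_)
      filter_upwards [self_mem_nhdsWithin] with z hz
      exact div_mul_cancel₀ _ (pow_ne_zero _ hz)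
    obtain ⟨R', rfl⟩ : X ∣ R := X_dvd_iff.mpr (by rwa [coeff_zero_eq_eval_zero])
    have hR' : Tendsto (fun z => R'.eval z / z ^ k) (𝓝[≠] 0) (𝓝 L) := by
      refine h.congr' ?_
      filter_upwards [self_mem_nhdsWithin] with z hz
      rw [eval_mul, eval_X, pow_succ', mul_div_mul_left _ _ hz]
    rw [pow_succ']
    exact mul_dvd_mul_left X (ih hR')

theorem Polynomial.eq_zero_of_tendsto_cobounded {R : 𝕜[X]}
    (h : Tendsto R.eval (cobounded 𝕜) (𝓝 0)) : R = 0 := by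
  rcases lt_or_ge 0 R.degree with hdeg | hdeg
  · exact absurd h.norm <| not_tendsto_nhds_of_tendsto_atTop
      (R.tendsto_norm_atTop hdeg tendsto_norm_cobounded_atTop) _
  · rw [eq_C_of_degree_le_zero hdeg] at h ⊢
    simpa using h

theorem eq_zero_of_eq_eval_div_pow_of_tendsto {f : 𝕜 → 𝕜} {R : 𝕜[X]} {k : ℕ} {L : 𝕜}
    (hf : ∀ z ≠ 0, f z = R.eval z / z ^ k) (h0 : Tendsto f (𝓝[≠] 0) (𝓝 L))
    (hinf : Tendsto f (cobounded 𝕜) (𝓝 0)) {z : 𝕜} (hz : z ≠ 0) : f z = 0 := by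
  obtain ⟨S, rfl⟩ :=
    X_pow_dvd_of_tendsto_eval_div_pow (h0.congr' (eventually_mem_nhdsWithin.mono hf))
  have hS : ∀ z ≠ 0, f z = S.eval z := fun z hz => by
    rw [hf z hz, eval_mul, eval_pow, eval_X, mul_div_cancel_left₀ _ (pow_ne_zero k hz)]
  have : S = 0 :=
    eq_zero_of_tendsto_cobounded (hinf.congr' ((eventually_ne_cobounded 0).mono hS))
  rw [hS z hz, this, eval_zero]

end Laurent

section Asymptotics

variable {𝕜 : Type*} [NontriviallyNormedField 𝕜] {f : 𝕜 → 𝕜} {a b : 𝕜}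

theorem tendsto_mul_sub_of_isLittleO
    (h : (fun z => f z - (a + b / z)) =o[cobounded 𝕜] (fun z => 1 / z)) :
    Tendsto (fun z => z * (f z - a)) (cobounded 𝕜) (𝓝 b) := by
  have hlim := h.tendsto_div_nhds_zero.add_const b
  rw [zero_add] at hlim
  refine hlim.congr' ?_
  filter_upwards [eventually_ne_cobounded 0] with z hz
  field_simp
  ring

theorem tendsto_of_tendsto_mul_sub (h : Tendsto (fun z => z * (f z - a)) (cobounded 𝕜) (𝓝 b)) :
    Tendsto f (cobounded 𝕜) (𝓝 a) := by
  have hlim := (tendsto_inv₀_cobounded.mul h).add_const a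
  rw [zero_mul, zero_add] at hlim
  refine hlim.congr' ?_
  filter_upwards [eventually_ne_cobounded 0] with z hz
  field_simp
  ring

end Asymptotics

section Branches

variable {𝕜 : Type*} [NontriviallyNormedField 𝕜] {E0 E1 : 𝕜 → 𝕜} {α β γ : 𝕜}

theorem mul_eq_of_eq_eval_div_pow_of_tendsto {Q : 𝕜[X]} {m : ℕ}
    (hQ : ∀ z ≠ 0, E0 z * E1 z = Q.eval z / z ^ m)
    (hα : Tendsto (fun z => E0 z / z) (𝓝[≠] 0) (𝓝 α))
    (hβ : Tendsto (fun z => z * E1 z) (𝓝[≠] 0) (𝓝 β))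
    (hE0 : Tendsto (fun z => z * (E0 z - 1)) (cobounded 𝕜) (𝓝 1))
    (hE1 : Tendsto (fun z => z * (E1 z - γ)) (cobounded 𝕜) (𝓝 (-γ))) {z : 𝕜} (hz : z ≠ 0) :
    E0 z * E1 z = γ := by
  have hlaurent : ∀ z ≠ 0,
      z * (E0 z * E1 z - γ) = (X * Q - C γ * X ^ (m + 1)).eval z / z ^ m := by
    intro z hz
    simp only [hQ z hz, eval_sub, eval_mul, eval_X, eval_C, eval_pow]
    field_simp
    ring
  have h0 : Tendsto (fun z => z * (E0 z * E1 z - γ)) (𝓝[≠] 0) (𝓝 (0 * (α * β - γ))) := by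
    have hid : Tendsto (fun z : 𝕜 => z) (𝓝[≠] 0) (𝓝 0) := tendsto_id.mono_left nhdsWithin_le_nhds
    refine (hid.mul ((hα.mul hβ).sub_const γ)).congr' ?_
    filter_upwards [self_mem_nhdsWithin] with z (hz : z ≠ 0)
    field_simp
  have hinf : Tendsto (fun z => z * (E0 z * E1 z - γ)) (cobounded 𝕜) (𝓝 0) := by
    -- z (E0 E1 - γ) = z (E0 - 1) E1 + z (E1 - γ)
    have hlim := (hE0.mul (tendsto_of_tendsto_mul_sub hE1)).add hE1
    rw [one_mul, add_neg_cancel] at hlim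
    exact hlim.congr fun z => by ring
  have hvanish := eq_zero_of_eq_eval_div_pow_of_tendsto hlaurent h0 hinf hz
  exact sub_eq_zero.mp ((mul_eq_zero.mp hvanish).resolve_left hz)

theorem add_eq_of_eq_eval_div_pow_of_tendsto {P : 𝕜[X]} {n : ℕ}
    (hP : ∀ z ≠ 0, E0 z + E1 z = P.eval z / z ^ n)
    (hα : Tendsto (fun z => E0 z / z) (𝓝[≠] 0) (𝓝 α))
    (hβ : Tendsto (fun z => z * E1 z) (𝓝[≠] 0) (𝓝 β))
    (hE0 : Tendsto (fun z => z * (E0 z - 1)) (cobounded 𝕜) (𝓝 1))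
    (hE1 : Tendsto (fun z => z * (E1 z - γ)) (cobounded 𝕜) (𝓝 (-γ))) {z : 𝕜} (hz : z ≠ 0) :
    E0 z + E1 z = (γ + 1) - (1 / z) * (γ - 1) := by
  have hlaurent : ∀ z ≠ 0, z * (E0 z + E1 z - ((γ + 1) - (1 / z) * (γ - 1))) =
      (X * P - (C (γ + 1) * X - C (γ - 1)) * X ^ n).eval z / z ^ n := by
    intro z hz
    simp only [hP z hz, eval_sub, eval_mul, eval_X, eval_C, eval_pow]
    field_simp
  have hid : Tendsto (fun z : 𝕜 => z) (𝓝[≠] 0) (𝓝 0) := tendsto_id.mono_left nhdsWithin_le_nhds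
  have h0 : Tendsto (fun z => z * (E0 z + E1 z - ((γ + 1) - (1 / z) * (γ - 1)))) (𝓝[≠] 0)
      (𝓝 (0 * 0 * α + β - 0 * (γ + 1) + (γ - 1))) := by
    refine (((hid.mul hid).mul hα).add hβ |>.sub (hid.mul_const _) |>.add_const _).congr' ?_
    filter_upwards [self_mem_nhdsWithin] with z (hz : z ≠ 0)
    field_simp
    ring
  have hinf : Tendsto (fun z => z * (E0 z + E1 z - ((γ + 1) - (1 / z) * (γ - 1))))
      (cobounded 𝕜) (𝓝 0) := by
    have hlim := (hE0.add hE1).add_const (γ - 1)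
    rw [show (1 : 𝕜) + -γ + (γ - 1) = 0 by ring] at hlim
    refine hlim.congr' ?_
    filter_upwards [eventually_ne_cobounded 0] with z hz
    field_simp
    ring
  have hvanish := eq_zero_of_eq_eval_div_pow_of_tendsto hlaurent h0 hinf hz
  exact sub_eq_zero.mp ((mul_eq_zero.mp hvanish).resolve_left hz)

end Branches

theorem stmt5_general (c : ℝ) (E0 E1 : ℂ → ℂ)
    (hsum_rat : ∃ (P : Polynomial ℂ) (n : ℕ), ∀ z : ℂ, z ≠ 0 →
      E0 z + E1 z = P.eval z / z ^ n)
    (hprod_rat : ∃ (Q : Polynomial ℂ) (m : ℕ), ∀ z : ℂ, z ≠ 0 →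
      E0 z * E1 z = Q.eval z / z ^ m)
    (hzero : ∃ α : ℂ, α ≠ 0 ∧
      Filter.Tendsto (fun z => E0 z / z) (nhdsWithin 0 {(0:ℂ)}ᶜ) (nhds α))
    (hpole : ∃ β : ℂ, β ≠ 0 ∧
      Filter.Tendsto (fun z => z * E1 z) (nhdsWithin 0 {(0:ℂ)}ᶜ) (nhds β))
    (hE0infty : (fun z => E0 z - (1 + 1/z)) =o[cobounded ℂ] (fun z => 1/z))
    (hE1infty : (fun z => E1 z - (1/(c:ℂ)) * (1 - 1/z)) =o[cobounded ℂ] (fun z => 1/z)) :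
    ∀ z : ℂ, z ≠ 0 →
      E0 z * E1 z = 1/(c:ℂ) ∧
      E0 z + E1 z = (1/(c:ℂ) + 1) - (1/z) * (1/(c:ℂ) - 1) ∧
      (E0 z)^2 + ((1/z) * (1/(c:ℂ) - 1) - (1/(c:ℂ) + 1)) * E0 z + 1/(c:ℂ) = 0 ∧
      (E1 z)^2 + ((1/z) * (1/(c:ℂ) - 1) - (1/(c:ℂ) + 1)) * E1 z + 1/(c:ℂ) = 0 := by
  obtain ⟨P, n, hP⟩ := hsum_rat
  obtain ⟨Q, m, hQ⟩ := hprod_rat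
  obtain ⟨α, -, hα⟩ := hzero
  obtain ⟨β, -, hβ⟩ := hpole
  have hE0 : Tendsto (fun z => z * (E0 z - 1)) (cobounded ℂ) (𝓝 1) :=
    tendsto_mul_sub_of_isLittleO hE0infty
  have hE1 : Tendsto (fun z => z * (E1 z - 1 / c)) (cobounded ℂ) (𝓝 (-(1 / c))) :=
    tendsto_mul_sub_of_isLittleO (hE1infty.congr_left fun z => by ring)
  intro z hz
  have hprod := mul_eq_of_eq_eval_div_pow_of_tendsto hQ hα hβ hE0 hE1 hz
  have hsum := add_eq_of_eq_eval_div_pow_of_tendsto hP hα hβ hE0 hE1 hz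
  refine ⟨hprod, hsum, ?_, ?_⟩
  · linear_combination E0 z * hsum - hprod
  · linear_combination E1 z * hsum - hprod

/-- If a two-valued algebraic function `E = (E0, E1)` has a simple zero of `E0` at `0`,
a simple pole of `E1` at `0`, rational symmetric functions (with pole only possibly at `0`),
and behaves as `E0 = 1 + 1/z + o(1/z)`, `E1 = (1/c)(1 - 1/z) + o(1/z)` at infinity, then
`E0·E1 = 1/c`, `E0 + E1 = (1/c+1) - (1/z)(1/c-1)`, and both branches satisfy the quadratic
`E^2 + ((1/z)(1/c-1) - (1/c+1))E + 1/c = 0`. -/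
theorem stmt5 (c : ℝ) (hc0 : 0 < c) (hc1 : c < 1) (E0 E1 : ℂ → ℂ)
    (hsum_rat : ∃ (P : Polynomial ℂ) (n : ℕ), ∀ z : ℂ, z ≠ 0 →
      E0 z + E1 z = P.eval z / z ^ n)
    (hprod_rat : ∃ (Q : Polynomial ℂ) (m : ℕ), ∀ z : ℂ, z ≠ 0 →
      E0 z * E1 z = Q.eval z / z ^ m)
    (hzero : ∃ α : ℂ, α ≠ 0 ∧
      Filter.Tendsto (fun z => E0 z / z) (nhdsWithin 0 {(0:ℂ)}ᶜ) (nhds α))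
    (hpole : ∃ β : ℂ, β ≠ 0 ∧
      Filter.Tendsto (fun z => z * E1 z) (nhdsWithin 0 {(0:ℂ)}ᶜ) (nhds β))
    (hE0infty : (fun z => E0 z - (1 + 1/z)) =o[cobounded ℂ] (fun z => 1/z))
    (hE1infty : (fun z => E1 z - (1/(c:ℂ)) * (1 - 1/z)) =o[cobounded ℂ] (fun z => 1/z)) :
    ∀ z : ℂ, z ≠ 0 →
      E0 z * E1 z = 1/(c:ℂ) ∧
      E0 z + E1 z = (1/(c:ℂ) + 1) - (1/z) * (1/(c:ℂ) - 1) ∧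
      (E0 z)^2 + ((1/z) * (1/(c:ℂ) - 1) - (1/(c:ℂ) + 1)) * E0 z + 1/(c:ℂ) = 0 ∧
      (E1 z)^2 + ((1/z) * (1/(c:ℂ) - 1) - (1/(c:ℂ) + 1)) * E1 z + 1/(c:ℂ) = 0 :=
  stmt5_general c E0 E1 hsum_rat hprod_rat hzero hpole hE0infty hE1infty
end

section
/- The condition (σ1 + σ2 - 2)^2 = 2(σ1 - σ2)^2 with σj = 1/cj, 0 < c1, c2 < 1, is equivalent to c1 = c2(1 ± √2)/(2c2 - 1 ± √2) (with matching signs), i.e. the boundary of the domain N = {(c1,c2) ∈ (0,1)^2 : c2(1-√2)/(2c2 - 1 - √2) < c1 < c2(1+√2)/(2c2 - 1 + √2)}. -/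
/-! Multiplying by `c₁c₂`, the identity `σ₁ + σ₂ - 2 = s (σ₁ - σ₂)` becomes the linear equation
`c₁ (2c₂ - 1 - s) = c₂ (1 - s)` in `c₁`. Taking square roots, `(σ₁ + σ₂ - 2)² = 2 (σ₁ - σ₂)²`
means `s = √2` or `s = -√2`, which give the two boundary curves. -/

theorem one_div_add_one_div_sub_two_eq_mul_iff {c₁ c₂ s : ℝ} (hc₁ : c₁ ≠ 0) (hc₂ : c₂ ≠ 0)
    (hs : s ≠ 1) :
    1 / c₁ + 1 / c₂ - 2 = s * (1 / c₁ - 1 / c₂) ↔ c₁ = c₂ * (1 - s) / (2 * c₂ - 1 - s) := by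
  have hlin : 1 / c₁ + 1 / c₂ - 2 = s * (1 / c₁ - 1 / c₂) ↔
      c₁ * (2 * c₂ - 1 - s) = c₂ * (1 - s) := by
    field_simp
    constructor <;> intro h <;> linarith
  rw [hlin]
  by_cases hd : 2 * c₂ - 1 - s = 0
  · -- Both sides are false: the right one reads `c₁ = 0` since `x / 0 = 0`.
    have : c₂ * (1 - s) ≠ 0 := mul_ne_zero hc₂ (sub_ne_zero.mpr hs.symm)
    simp only [hd, mul_zero, div_zero, hc₁, iff_false]
    exact this.symm
  · rw [eq_div_iff hd]

theorem stmt10_general (c1 c2 : ℝ) (hc1 : 0 < c1) (hc2 : 0 < c2)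
    (σ1 σ2 : ℝ) (hσ1 : σ1 = 1/c1) (hσ2 : σ2 = 1/c2) :
    (σ1 + σ2 - 2)^2 = 2*(σ1 - σ2)^2 ↔
      (c1 = c2*(1 + Real.sqrt 2)/(2*c2 - 1 + Real.sqrt 2) ∨
       c1 = c2*(1 - Real.sqrt 2)/(2*c2 - 1 - Real.sqrt 2)) := by
  subst hσ1 hσ2
  have hsqrt : 1 < Real.sqrt 2 := by
    rw [Real.lt_sqrt zero_le_one]
    norm_num
  rw [show 2 * (1 / c1 - 1 / c2) ^ 2 = (Real.sqrt 2 * (1 / c1 - 1 / c2)) ^ 2 by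
      rw [mul_pow, Real.sq_sqrt zero_le_two],
    sq_eq_sq_iff_eq_or_eq_neg, ← neg_mul,
    one_div_add_one_div_sub_two_eq_mul_iff hc1.ne' hc2.ne' hsqrt.ne',
    one_div_add_one_div_sub_two_eq_mul_iff hc1.ne' hc2.ne' (by linarith), or_comm,
    sub_neg_eq_add, sub_neg_eq_add]

/-- With `σj = 1/cj`, `0 < c1, c2 < 1`, the condition `(σ1+σ2-2)^2 = 2(σ1-σ2)^2`
is equivalent to `c1 = c2(1+√2)/(2c2 - 1 + √2)` or `c1 = c2(1-√2)/(2c2 - 1 - √2)`,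
i.e. the boundary of the Nikishin domain. -/
theorem stmt10 (c1 c2 : ℝ) (hc1 : 0 < c1) (hc1' : c1 < 1) (hc2 : 0 < c2) (hc2' : c2 < 1)
    (σ1 σ2 : ℝ) (hσ1 : σ1 = 1/c1) (hσ2 : σ2 = 1/c2) :
    (σ1 + σ2 - 2)^2 = 2*(σ1 - σ2)^2 ↔
      (c1 = c2*(1 + Real.sqrt 2)/(2*c2 - 1 + Real.sqrt 2) ∨
       c1 = c2*(1 - Real.sqrt 2)/(2*c2 - 1 - Real.sqrt 2)) :=
  stmt10_general c1 c2 hc1 hc2 σ1 σ2 hσ1 hσ2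
end

section
/- Let F(L) = 2 ln L + (1/(4L^2))(2L+b+b^2)(2L-b+b^2)(2L-1+b^2) · ln( ((2L+b+b^2)(2L-b+b^2))/((2L-1+b^2)^2) ) and t(L) = (1/4)(2L+b+b^2)(2L-b+b^2)(2L-1+b^2)/L^2. Then dF/dL divided by dt/dL equals ln( ((2L+b+b^2)(2L-b+b^2))/((2L-1+b^2)^2) ), i.e. (d/dt)F(L(t)) = ln φ where φ = (2L+b+b^2)(2L-b+b^2)/(2L-1+b^2)^2. -/
/-!
Write `F = 2 log L + t · log φ`. Then `F' = 2/L + t' log φ + t (log φ)'`, and the last term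
cancels `2/L`: with `s = 2L + b²` the three factors of `t` are `s + b`, `s - b`, `s - 1`, and
`t (log φ)' = (2(s - 1)·2s - 4(s² - b²)) / (4L²) = 4(b² - s) / (4L²) = -2/L`.
-/

open Real

theorem deriv_add_mul_div_deriv_eq {g t h : ℝ → ℝ} {x : ℝ} (hg : DifferentiableAt ℝ g x)
    (ht : DifferentiableAt ℝ t x) (hh : DifferentiableAt ℝ h x)
    (hcancel : deriv g x + t x * deriv h x = 0) (ht' : deriv t x ≠ 0) :
    deriv (fun y => g y + t y * h y) x / deriv t x = h x := by
  rw [(hg.hasDerivAt.fun_add (ht.hasDerivAt.fun_mul hh.hasDerivAt)).deriv, div_eq_iff ht']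
  linear_combination hcancel

theorem hasDerivAt_log_mul_div_sq {A B C : ℝ → ℝ} {A' B' C' x : ℝ} (hA : HasDerivAt A A' x)
    (hB : HasDerivAt B B' x) (hC : HasDerivAt C C' x) (hA0 : A x ≠ 0) (hB0 : B x ≠ 0)
    (hC0 : C x ≠ 0) :
    HasDerivAt (fun y => log (A y * B y / C y ^ 2)) (A' / A x + B' / B x - 2 * C' / C x) x := by
  have hC2 : C x ^ 2 ≠ 0 := pow_ne_zero 2 hC0
  refine (((hA.fun_mul hB).fun_div (hC.fun_pow 2) hC2).log
    (div_ne_zero (mul_ne_zero hA0 hB0) hC2)).congr_deriv ?_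
  field_simp
  ring

theorem two_div_add_mul_deriv_log_eq_zero (b L : ℝ) (hL : L ≠ 0) (hA : 2*L + b + b^2 ≠ 0)
    (hB : 2*L - b + b^2 ≠ 0) (hC : 2*L - 1 + b^2 ≠ 0) :
    2 / L + (1/4)*((2*L + b + b^2)*(2*L - b + b^2)*(2*L - 1 + b^2))/L^2 *
      (2 / (2*L + b + b^2) + 2 / (2*L - b + b^2) - 2 * 2 / (2*L - 1 + b^2)) = 0 := by
  field_simp
  ring

theorem stmt16_general (b : ℝ) (L : ℝ) (hL : 0 < L)
    (h1 : 0 < 2*L + b + b^2) (h2 : 0 < 2*L - b + b^2) (h3 : 0 < 2*L - 1 + b^2)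
    (F t : ℝ → ℝ)
    (hF : F = fun L => 2 * Real.log L +
      (1/(4*L^2)) * ((2*L + b + b^2)*(2*L - b + b^2)*(2*L - 1 + b^2)) *
        Real.log (((2*L + b + b^2)*(2*L - b + b^2))/((2*L - 1 + b^2)^2)))
    (ht : t = fun L => (1/4)*((2*L + b + b^2)*(2*L - b + b^2)*(2*L - 1 + b^2))/L^2)
    (hdt : deriv t L ≠ 0) :
    deriv F L / deriv t L =
      Real.log (((2*L + b + b^2)*(2*L - b + b^2))/((2*L - 1 + b^2)^2)) := by
  have hF' : F = fun y => 2 * log y + t y *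
      log ((2*y + b + b^2)*(2*y - b + b^2)/(2*y - 1 + b^2)^2) := by
    subst hF ht
    funext y
    ring
  have hlog : HasDerivAt (fun y => log ((2*y + b + b^2)*(2*y - b + b^2)/(2*y - 1 + b^2)^2))
      (2 / (2*L + b + b^2) + 2 / (2*L - b + b^2) - 2 * 2 / (2*L - 1 + b^2)) L := by
    have h2x : HasDerivAt (fun y : ℝ => 2 * y) 2 L := by simpa using (hasDerivAt_id L).const_mul 2
    exact hasDerivAt_log_mul_div_sq ((h2x.add_const b).add_const (b^2))
      ((h2x.sub_const b).add_const (b^2)) ((h2x.sub_const 1).add_const (b^2)) h1.ne' h2.ne' h3.ne'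
  have ht_diff : DifferentiableAt ℝ t L := by
    subst ht
    fun_prop (disch := positivity)
  rw [hF']
  refine deriv_add_mul_div_deriv_eq (by fun_prop (disch := positivity)) ht_diff
    hlog.differentiableAt ?_ hdt
  rw [((hasDerivAt_log hL.ne').const_mul 2).deriv, hlog.deriv, ht]
  simpa [div_eq_mul_inv] using two_div_add_mul_deriv_log_eq_zero b L hL.ne' h1.ne' h2.ne' h3.ne'

/-- For `F(L) = 2 ln L + (1/(4L²))(2L+b+b²)(2L-b+b²)(2L-1+b²)·ln(((2L+b+b²)(2L-b+b²))/(2L-1+b²)²)`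
and `t(L) = (1/4)(2L+b+b²)(2L-b+b²)(2L-1+b²)/L²`, the quotient `F'(L)/t'(L)` equals
`ln(((2L+b+b²)(2L-b+b²))/(2L-1+b²)²)`, i.e. `(d/dt)F(L(t)) = ln φ`. -/
theorem stmt16 (b : ℝ) (hb : 1 < b) (L : ℝ) (hL : 0 < L)
    (h1 : 0 < 2*L + b + b^2) (h2 : 0 < 2*L - b + b^2) (h3 : 0 < 2*L - 1 + b^2)
    (F t : ℝ → ℝ)
    (hF : F = fun L => 2 * Real.log L +
      (1/(4*L^2)) * ((2*L + b + b^2)*(2*L - b + b^2)*(2*L - 1 + b^2)) *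
        Real.log (((2*L + b + b^2)*(2*L - b + b^2))/((2*L - 1 + b^2)^2)))
    (ht : t = fun L => (1/4)*((2*L + b + b^2)*(2*L - b + b^2)*(2*L - 1 + b^2))/L^2)
    (hdt : deriv t L ≠ 0) :
    deriv F L / deriv t L =
      Real.log (((2*L + b + b^2)*(2*L - b + b^2))/((2*L - 1 + b^2)^2)) :=
  stmt16_general b L hL h1 h2 h3 F t hF ht hdt
end
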